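/- The quaternion twist tree produces the correct quaternion basis products: letting e : ℕ → ℍ[ℝ] be given by e 0 = 1, e 1 = i, e 2 = j, e 3 = k in the real quaternions, for all natural numbers p, q < 4 one has (e p) * (e q) = ω_3(p,q) • e (p ⊕ q), where ⊕ is bitwise XOR. -/

import Mathlib

/-- The five states of the Cayley–Dickson twist tree:
corner (C), top (T), left (L), diagonal (D) and interior (I). -/
inductive TwistState : Type
  | C | T | L | D | I
deriving DecidableEq

open TwistState

/-- The interior-node sign `i_k(a,b)` for the doubling product `P_k`, `k ∈ {0,1,2,3}`. -/
def iTwist (k : ℕ) (a b : Bool) : ℤ :=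
  match k with
  | 0 => if a = false ∧ b = false then -1 else 1
  | 1 => -1
  | 2 => 1
  | _ => if a = false ∧ b = false then 1 else -1

/-- One step of the twist-tree finite-state computation: from the current
(state, sign) pair, read a doublet of bits `(a, b)` and move to the new
(state, sign) pair. -/
def twistStep (k : ℕ) : TwistState × ℤ → Bool × Bool → TwistState × ℤ
  | (C, s), (false, false) => (C, s)
  | (C, s), (false, true)  => (T, s)
  | (C, s), (true, false)  => (L, s)
  | (C, s), (true, true)   => (D, -s)
  | (T, s), (false, false) => (T, s)
  | (T, s), (false, true)  => (T, s)
  | (T, s), (true, false)  => (I, s)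
  | (T, s), (true, true)   => (I, -s)
  | (L, s), (false, false) => (L, s)
  | (L, s), (false, true)  => (I, -s)
  | (L, s), (true, false)  => (L, s)
  | (L, s), (true, true)   => (I, s)
  | (D, s), (false, false) => (D, s)
  | (D, s), (false, true)  => (I, -s)
  | (D, s), (true, false)  => (I, s)
  | (D, s), (true, true)   => (D, s)
  | (I, s), (a, b)         => (I, s * iTwist k a b)

/-- The Cayley–Dickson twist `ω_k(p,q)` for the doubling product `P_k`:
write `p` and `q` in binary with a common number of bits (padding with
leading zeros), read the doublets of bits from most significant to least
significant, running the twist-tree automaton starting at state `C` with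
sign `+1`; the result is the final sign. -/
def omegaTwist (k : ℕ) (p q : ℕ) : ℤ :=
  (((List.range (max (Nat.size p) (Nat.size q))).reverse.map
      (fun i => (p.testBit i, q.testBit i))).foldl (twistStep k) (C, 1)).2

open Quaternion in
/-- The quaternion basis vectors: `e 0 = 1`, `e 1 = i`, `e 2 = j`, `e 3 = k`
in the real quaternions. -/
noncomputable def quatBasis : ℕ → ℍ[ℝ]
  | 0 => 1
  | 1 => ⟨0, 1, 0, 0⟩
  | 2 => ⟨0, 0, 1, 0⟩
  | 3 => ⟨0, 0, 0, 1⟩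
  | _ => 0

/-!
Reading a leading doublet `(0, 0)` from the start state `(C, +1)` changes nothing, so `ω_k(p, q)`
may be computed with any number of bits `n` with `p, q < 2 ^ n`. For `p, q < 4` two bits suffice,
and the resulting sixteen values of `ω_3` are exactly Hamilton's signs `i² = j² = k² = -1`,
`i j = k = -j i`, `j k = i = -k j`, `k i = j = -i k`.
-/

/-- For distinct imaginary units the sign is `+1` exactly when `q` follows `p` in the cycle
`1 → 2 → 3 → 1`. -/
def quatSign (p q : ℕ) : ℤ :=
  if p = 0 ∨ q = 0 then 1 else if p = q then -1 else if q % 3 = (p + 1) % 3 then 1 else -1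

section
variable (n : ℕ)

@[simp] theorem quatBasis_re : (quatBasis n).re = if n = 0 then 1 else 0 := by
  rcases n with _ | _ | _ | _ | n <;> rfl

@[simp] theorem quatBasis_imI : (quatBasis n).imI = if n = 1 then 1 else 0 := by
  rcases n with _ | _ | _ | _ | n <;> rfl

@[simp] theorem quatBasis_imJ : (quatBasis n).imJ = if n = 2 then 1 else 0 := by
  rcases n with _ | _ | _ | _ | n <;> rfl

@[simp] theorem quatBasis_imK : (quatBasis n).imK = if n = 3 then 1 else 0 := by
  rcases n with _ | _ | _ | _ | n <;> rfl

end

theorem quatBasis_mul_eq_quatSign_smul {p q : ℕ} (hp : p < 4) (hq : q < 4) :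
    quatBasis p * quatBasis q = quatSign p q • quatBasis (p ^^^ q) := by
  interval_cases p <;> interval_cases q <;> simp [quatSign, Quaternion.ext_iff]

def omegaTwistOfWidth (k n p q : ℕ) : ℤ :=
  (((List.range n).reverse.map (fun i => (p.testBit i, q.testBit i))).foldl (twistStep k) (C, 1)).2

theorem omegaTwistOfWidth_succ_of_lt (k : ℕ) {n p q : ℕ} (hp : p < 2 ^ n) (hq : q < 2 ^ n) :
    omegaTwistOfWidth k (n + 1) p q = omegaTwistOfWidth k n p q := by
  simp only [omegaTwistOfWidth, List.range_succ, List.reverse_append, List.reverse_singleton,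
    List.singleton_append, List.map_cons, List.foldl_cons, Nat.testBit_eq_false_of_lt hp,
    Nat.testBit_eq_false_of_lt hq]
  -- the leading doublet `(0, 0)` fixes the initial state `(C, 1)`
  rfl

theorem omegaTwist_eq_omegaTwistOfWidth (k : ℕ) {n p q : ℕ} (hp : p < 2 ^ n) (hq : q < 2 ^ n) :
    omegaTwist k p q = omegaTwistOfWidth k n p q := by
  have hn : max p.size q.size ≤ n := max_le (Nat.size_le.2 hp) (Nat.size_le.2 hq)
  clear hp hq
  induction n, hn using Nat.le_induction with
  | base => rfl
  | succ n hn ih =>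
    rw [omegaTwistOfWidth_succ_of_lt k (Nat.size_le.1 (le_of_max_le_left hn))
      (Nat.size_le.1 (le_of_max_le_right hn)), ih]

theorem omegaTwist_three_eq_quatSign {p q : ℕ} (hp : p < 4) (hq : q < 4) :
    omegaTwist 3 p q = quatSign p q := by
  rw [omegaTwist_eq_omegaTwistOfWidth 3 (n := 2) hp hq]
  interval_cases p <;> interval_cases q <;> decide

/-- The quaternion twist tree produces the correct quaternion basis products:
for all `p, q < 4`, `(e p) * (e q) = ω_3(p,q) • e (p ⊕ q)`, where `⊕` is
bitwise XOR. -/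
theorem quatBasis_mul :
    ∀ p q : ℕ, p < 4 → q < 4 →
      quatBasis p * quatBasis q = omegaTwist 3 p q • quatBasis (p ^^^ q) := by
  intro p q hp hq
  rw [omegaTwist_three_eq_quatSign hp hq, quatBasis_mul_eq_quatSign_smul hp hq]
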